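/- Fix an integer k ≥ 2 and real numbers 0 = a_0 < a_1 < ⋯ < a_{k−1}. For PMFs A, B on a countable type Ω, define for each j ∈ {1, …, k−1} the set S_j := {ω : a_{j−1}·B(ω) < A(ω) ≤ a_j·B(ω)}. Then ∑_{j=1}^{k−1} (1/a_j)·(∑_{ω ∈ S_j} A(ω)) ≤ 1. -/

import Mathlib

/-!
On the bucket `S_j` we have `A ≤ a_j · B`, so `(1 / a_j) · A(S_j) ≤ B(S_j)`. Since `a` is increasing,
the buckets are pairwise disjoint, and their `B`-masses add up to at most `B(Ω) = 1`.
-/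

theorem PMF.summable_toReal {Ω : Type*} (p : PMF Ω) : Summable fun ω ↦ (p ω).toReal :=
  ENNReal.summable_toReal (p.tsum_coe ▸ ENNReal.one_ne_top)

theorem PMF.sum_tsum_toReal_le_one_of_pairwiseDisjoint {Ω ι : Type*} (p : PMF Ω) {s : Finset ι}
    {S : ι → Set Ω} (hS : (s : Set ι).PairwiseDisjoint S) :
    ∑ j ∈ s, ∑' ω : S j, (p ω).toReal ≤ 1 := by
  calc ∑ j ∈ s, ∑' ω : S j, (p ω).toReal
      = ∑' ω, ∑ j ∈ s, (S j).indicator (fun ω ↦ (p ω).toReal) ω := by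
        rw [Summable.tsum_finsetSum fun j _ ↦ p.summable_toReal.indicator (S j)]
        exact Finset.sum_congr rfl fun j _ ↦ tsum_subtype (S j) fun ω ↦ (p ω).toReal
    _ = ∑' ω : ⋃ j ∈ s, S j, (p ω).toReal := by
        rw [tsum_subtype (⋃ j ∈ s, S j) fun ω ↦ (p ω).toReal]
        exact tsum_congr fun ω ↦ (Finset.indicator_biUnion_apply s S hS ω).symm
    _ ≤ ∑' ω, (p ω).toReal :=
        p.summable_toReal.tsum_subtype_le _ _ fun _ ↦ ENNReal.toReal_nonneg
    _ = 1 := by rw [← ENNReal.tsum_toReal_eq p.apply_ne_top, p.tsum_coe, ENNReal.toReal_one]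

section LikelihoodRatioBucket

variable {Ω : Type*} (a : ℕ → ℝ) (A B : PMF Ω)

/-- Cross-multiplied form of `a (j - 1) < A ω / B ω ≤ a j`; it contains no `ω` with `B ω = 0`. -/
def likelihoodRatioBucket (j : ℕ) : Set Ω :=
  {ω | a (j - 1) * (B ω).toReal < (A ω).toReal ∧ (A ω).toReal ≤ a j * (B ω).toReal}

variable {a}

theorem disjoint_likelihoodRatioBucket {i j : ℕ} (hij : a i ≤ a (j - 1)) :
    Disjoint (likelihoodRatioBucket a A B i) (likelihoodRatioBucket a A B j) :=
  Set.disjoint_left.mpr fun _ ⟨_, hi⟩ ⟨hj, _⟩ ↦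
    (hi.trans (mul_le_mul_of_nonneg_right hij ENNReal.toReal_nonneg)).not_gt hj

theorem pairwiseDisjoint_likelihoodRatioBucket {n : ℕ} (ha : MonotoneOn a (Set.Iic n)) :
    (Finset.Icc 1 n : Set ℕ).PairwiseDisjoint (likelihoodRatioBucket a A B) := by
  have key : ∀ i j, j ≤ n → i < j →
      Disjoint (likelihoodRatioBucket a A B i) (likelihoodRatioBucket a A B j) :=
    fun i j hj hij ↦ disjoint_likelihoodRatioBucket A B <|
      ha (Set.mem_Iic.mpr (by omega)) (Set.mem_Iic.mpr (by omega)) (by omega)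
  intro i hi j hj hne
  simp only [Finset.coe_Icc, Set.mem_Icc] at hi hj
  rcases hne.lt_or_gt with h | h
  · exact key i j hj.2 h
  · exact (key j i hi.2 h).symm

theorem one_div_mul_tsum_likelihoodRatioBucket_le {j : ℕ} (hj : 0 < a j) :
    1 / a j * ∑' ω : likelihoodRatioBucket a A B j, (A ω).toReal
      ≤ ∑' ω : likelihoodRatioBucket a A B j, (B ω).toReal := by
  rw [one_div, inv_mul_le_iff₀ hj, ← tsum_mul_left]
  exact (A.summable_toReal.subtype _).tsum_le_tsum (fun ω ↦ ω.2.2)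
    ((B.summable_toReal.subtype _).mul_left _)

end LikelihoodRatioBucket

theorem privacy_buckets_mass_le_one_general {Ω : Type*} {k : ℕ}
    (a : ℕ → ℝ) (ha0 : a 0 = 0) (hamono : ∀ i, i < k - 1 → a i < a (i + 1))
    (A B : PMF Ω) :
    ∑ j ∈ Finset.Icc 1 (k - 1),
      (1 / a j) *
        ∑' ω : {ω : Ω // a (j - 1) * (B ω).toReal < (A ω).toReal ∧
                  (A ω).toReal ≤ a j * (B ω).toReal},
          (A ω.1).toReal ≤ 1 := by
  have hmono : StrictMonoOn a (Set.Iic (k - 1)) := strictMonoOn_Iic_of_lt_succ hamono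
  have hpos : ∀ j ∈ Finset.Icc 1 (k - 1), 0 < a j := fun j hj ↦ by
    rw [Finset.mem_Icc] at hj
    exact ha0 ▸ hmono (Set.mem_Iic.mpr (Nat.zero_le _)) (Set.mem_Iic.mpr hj.2) hj.1
  calc _ ≤ ∑ j ∈ Finset.Icc 1 (k - 1), ∑' ω : likelihoodRatioBucket a A B j, (B ω).toReal :=
        Finset.sum_le_sum fun j hj ↦ one_div_mul_tsum_likelihoodRatioBucket_le A B (hpos j hj)
    _ ≤ 1 := B.sum_tsum_toReal_le_one_of_pairwiseDisjoint
        (pairwiseDisjoint_likelihoodRatioBucket A B hmono.monotoneOn)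

/-- Key step in showing that the pessimistic Privacy Buckets estimate is a valid
privacy loss distribution: bucketing the outcomes by likelihood ratio
`A(ω)/B(ω) ∈ (a (j-1), a j]`, the total rescaled mass is at most `1`. -/
theorem privacy_buckets_mass_le_one {Ω : Type*} [Countable Ω] {k : ℕ} (hk : 2 ≤ k)
    (a : ℕ → ℝ) (ha0 : a 0 = 0) (hamono : ∀ i, i < k - 1 → a i < a (i + 1))
    (A B : PMF Ω) :
    ∑ j ∈ Finset.Icc 1 (k - 1),
      (1 / a j) *
        ∑' ω : {ω : Ω // a (j - 1) * (B ω).toReal < (A ω).toReal ∧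
                  (A ω).toReal ≤ a j * (B ω).toReal},
          (A ω.1).toReal ≤ 1 :=
  privacy_buckets_mass_le_one_general a ha0 hamono A B
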